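/- Let R be a commutative ring whose additive group is torsion-free (N·c = 0 with N a nonzero integer and c ∈ R implies c = 0), let r be a positive integer, and let L be a unit of R such that L^i − 1 is a unit of R for every positive integer i. Let S ⊆ ℕ^r × ℤ^r be a finite set and let c_{a,b} ∈ R for each (a,b) ∈ S. If Σ_{(a,b)∈S} c_{a,b} · n^a · L^{b·n} = 0 for every n ∈ ℕ^r, where n^a = n_1^{a_1}⋯n_r^{a_r} and b·n = b_1 n_1 + ⋯ + b_r n_r, then c_{a,b} = 0 for every (a,b) ∈ S. -/

import Mathlib

/-!
Put `λ_β = L ^ β`. The functions `m ↦ m ^ a * λ_β ^ m` on `ℕ` are linearly independent over `R`,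
and the functions of the statement are their products over the `r` coordinates; linear
independence survives such products (evaluate all coordinates but one), so only `r = 1` needs
work. There, group a vanishing combination as `∑ β, P β (m) * λ_β ^ m` with polynomials `P β`.
The operator `f ↦ f (· + 1) - λ_γ * f` acts on `P (m) * λ_β ^ m` through
`P ↦ λ_β * P (X + 1) - λ_γ * P`: this lowers the degree of `P γ` and, as `λ_β - λ_γ` is a unit,
is injective for `β ≠ γ`. Iterating it kills the `γ`-term, induction on the number of `β` gives
`P β = 0` for `β ≠ γ`, and then `P γ` vanishes on `ℕ`. Finally a polynomial vanishing on `ℕ` is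
zero: its `d`-th forward difference is `d!` times its leading coefficient, and `R` is
torsion-free.
-/

open Polynomial Finset

namespace Polynomial

variable {R : Type*} [CommRing R]

theorem eq_zero_of_forall_eval_natCast_eq_zero [IsAddTorsionFree R] {p : R[X]}
    (hp : ∀ n : ℕ, p.eval (n : R) = 0) : p = 0 := by
  have h : p.natDegree.factorial • p.leadingCoeff = 0 := by
    simpa [fwdDiff_iter_eq_sum_shift, hp, mul_comm, eq_comm] using
      congrFun p.fwdDiff_iter_degree_eq_factorial 0
  rw [← leadingCoeff_eq_zero]
  exact (smul_eq_zero.1 h).resolve_left p.natDegree.factorial_ne_zero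

noncomputable def shiftSub (a b : R) : R[X] →ₗ[R] R[X] := a • taylor 1 - b • LinearMap.id

theorem shiftSub_apply (a b : R) (p : R[X]) : shiftSub a b p = a • taylor 1 p - b • p := rfl

theorem eval_natCast_shiftSub (a b : R) (p : R[X]) (m : ℕ) :
    (shiftSub a b p).eval (m : R) = a * p.eval ((m + 1 : ℕ) : R) - b * p.eval (m : R) := by
  simp [shiftSub_apply, taylor_eval]

theorem coeff_shiftSub_of_natDegree_le (a b : R) {p : R[X]} {d : ℕ} (hd : p.natDegree ≤ d) :
    (shiftSub a b p).coeff d = (a - b) * p.coeff d := by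
  have : (taylor 1 p).coeff d = p.coeff d := by
    rcases hd.eq_or_lt with rfl | hlt
    · exact coeff_taylor_natDegree 1 p
    · rw [coeff_eq_zero_of_natDegree_lt hlt,
        coeff_eq_zero_of_natDegree_lt (by rwa [natDegree_taylor])]
  simp [shiftSub_apply, this, sub_mul]

theorem degree_shiftSub_self_lt (a : R) {p : R[X]} {k : ℕ} (hp : p.degree < ↑(k + 1)) :
    (shiftSub a a p).degree < k := by
  rw [degree_lt_iff_coeff_zero] at hp ⊢
  intro N hN
  rw [coeff_shiftSub_of_natDegree_le a a (d := N)
      (natDegree_le_iff_coeff_eq_zero.2 fun M hM => hp M (by omega)),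
    sub_self, zero_mul]

theorem shiftSub_self_iterate_eq_zero (a : R) {p : R[X]} {k : ℕ} (hp : p.degree < k) :
    (shiftSub a a)^[k] p = 0 := by
  induction k generalizing p with
  | zero => simpa using hp
  | succ k ih => exact ih (degree_shiftSub_self_lt a hp)

theorem shiftSub_injective {a b : R} (hab : IsUnit (a - b)) :
    Function.Injective (shiftSub a b) := by
  refine (injective_iff_map_eq_zero _).2 fun p hp => ?_
  have h := coeff_shiftSub_of_natDegree_le a b (le_refl p.natDegree)
  rwa [hp, coeff_zero, eq_comm, hab.mul_right_eq_zero, ← leadingCoeff, leadingCoeff_eq_zero] at h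

theorem sum_eval_shiftSub_mul_pow {ι : Type*} (s : Finset ι) (lam : ι → R) (μ : R)
    (P : ι → R[X]) (m : ℕ) :
    ∑ β ∈ s, (shiftSub (lam β) μ (P β)).eval (m : R) * lam β ^ m =
      ∑ β ∈ s, (P β).eval ((m + 1 : ℕ) : R) * lam β ^ (m + 1) -
        μ * ∑ β ∈ s, (P β).eval (m : R) * lam β ^ m := by
  simp only [eval_natCast_shiftSub, mul_sum, ← sum_sub_distrib]
  exact sum_congr rfl fun β _ => by ring

theorem sum_eval_shiftSub_iterate_mul_pow_eq_zero {ι : Type*} (s : Finset ι) (lam : ι → R)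
    (μ : R) {P : ι → R[X]} (hP : ∀ m : ℕ, ∑ β ∈ s, (P β).eval (m : R) * lam β ^ m = 0) (k : ℕ)
    (m : ℕ) : ∑ β ∈ s, ((shiftSub (lam β) μ)^[k] (P β)).eval (m : R) * lam β ^ m = 0 := by
  induction k generalizing m with
  | zero => exact hP m
  | succ k ih =>
    simp only [Function.iterate_succ_apply']
    rw [sum_eval_shiftSub_mul_pow, ih, ih, mul_zero, sub_zero]

theorem eq_zero_of_forall_sum_eval_mul_pow_eq_zero [IsAddTorsionFree R] {ι : Type*}
    {lam : ι → Rˣ} (hlam : Pairwise fun β γ => IsUnit ((lam β : R) - lam γ)) (s : Finset ι)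
    {P : ι → R[X]} (hP : ∀ m : ℕ, ∑ β ∈ s, (P β).eval (m : R) * (lam β : R) ^ m = 0) :
    ∀ β ∈ s, P β = 0 := by
  classical
  induction s using Finset.induction_on generalizing P with
  | empty => simp
  | insert γ s hγ ih =>
    obtain ⟨k, hk⟩ : ∃ k : ℕ, (P γ).degree < k :=
      ⟨_, degree_le_natDegree.trans_lt (WithBot.coe_lt_coe.2 (Nat.lt_succ_self _))⟩
    have hkill := sum_eval_shiftSub_iterate_mul_pow_eq_zero _ _ (lam γ : R) hP k
    simp only [sum_insert hγ, shiftSub_self_iterate_eq_zero _ hk, eval_zero, zero_mul,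
      zero_add] at hkill
    have hs : ∀ β ∈ s, P β = 0 := fun β hβ =>
      ((shiftSub_injective (hlam (ne_of_mem_of_not_mem hβ hγ))).iterate k).eq_iff.1
        ((ih hkill β hβ).trans (iterate_map_zero _ k).symm)
    refine forall_mem_insert _ _ _ |>.2 ⟨eq_zero_of_forall_eval_natCast_eq_zero fun m => ?_, hs⟩
    have h := hP m
    rw [sum_insert hγ, sum_eq_zero fun β hβ => by simp [hs β hβ], add_zero] at h
    exact ((lam γ).isUnit.pow m).mul_left_eq_zero.1 h

end Polynomial

section

variable {R : Type*} [CommRing R]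

theorem LinearIndependent.mul_prod {ι κ α β : Type*} {v : ι → α → R} {w : κ → β → R}
    (hv : LinearIndependent R v) (hw : LinearIndependent R w) :
    LinearIndependent R fun p : ι × κ => fun x : α × β => v p.1 x.1 * w p.2 x.2 := by
  classical
  refine linearIndependent_iff''.2 fun s g hg hsum => ?_
  have hsum' : ∀ x y, ∑ k ∈ s.image Prod.snd, (∑ i ∈ s.image Prod.fst, g (i, k) * v i x) * w k y
      = 0 := by
    intro x y
    calc _ = ∑ p ∈ s.image Prod.fst ×ˢ s.image Prod.snd, g p * (v p.1 x * w p.2 y) := by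
          simp only [sum_product_right, sum_mul, mul_assoc]
      _ = ∑ p ∈ s, g p * (v p.1 x * w p.2 y) :=
          (sum_subset subset_product fun p _ hp => by rw [hg p hp, zero_mul]).symm
      _ = 0 := by simpa using congrFun hsum (x, y)
  have hk : ∀ x k, ∑ i ∈ s.image Prod.fst, g (i, k) * v i x = 0 := fun x =>
    linearIndependent_iff''.1 hw (s.image Prod.snd) _
      (fun k hk => sum_eq_zero fun i _ => by
        rw [hg (i, k) fun h => hk (mem_image_of_mem _ h), zero_mul])
      (funext fun y => by simpa using hsum' x y)
  rintro ⟨i, k⟩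
  exact linearIndependent_iff''.1 hv (s.image Prod.fst) (fun i => g (i, k))
    (fun i hi => hg _ fun h => hi (mem_image_of_mem _ h)) (funext fun x => by simpa using hk x k) i

theorem LinearIndependent.fin_pi_prod {ι α : Type*} {v : ι → α → R} (hv : LinearIndependent R v)
    (r : ℕ) :
    LinearIndependent R fun a : Fin r → ι => fun x : Fin r → α => ∏ j, v (a j) (x j) := by
  induction r with
  | zero =>
    refine LinearIndependent.of_comp (LinearMap.proj finZeroElim) ?_
    convert (Module.Basis.singleton (Fin 0 → ι) R).linearIndependent
    ext
    simp
  | succ r ih =>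
    have h := (hv.mul_prod ih).map' _
      (LinearEquiv.funCongrLeft R R (Fin.consEquiv fun _ => α).symm).ker
    refine (linearIndependent_equiv' (Fin.consEquiv fun _ => ι).symm ?_).2 h
    ext a x
    simp [Fin.prod_univ_succ, Fin.consEquiv, Fin.tail]

theorem linearIndependent_natCast_pow_mul_pow [IsAddTorsionFree R] {ι : Type*} {lam : ι → Rˣ}
    (hlam : Pairwise fun β γ => IsUnit ((lam β : R) - lam γ)) :
    LinearIndependent R fun p : ℕ × ι => fun m : ℕ => (m : R) ^ p.1 * (lam p.2 : R) ^ m := by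
  classical
  refine linearIndependent_iff''.2 fun s g hg hsum => ?_
  set P : ι → R[X] := fun β => ∑ a ∈ s.image Prod.fst, monomial a (g (a, β))
  have hP : ∀ m : ℕ, ∑ β ∈ s.image Prod.snd, (P β).eval (m : R) * (lam β : R) ^ m = 0 := by
    intro m
    calc _ = ∑ p ∈ s.image Prod.fst ×ˢ s.image Prod.snd,
          g p * ((m : R) ^ p.1 * (lam p.2 : R) ^ m) := by
          simp only [P, sum_product_right, eval_finsetSum, eval_monomial, sum_mul, mul_assoc]
      _ = ∑ p ∈ s, g p * ((m : R) ^ p.1 * (lam p.2 : R) ^ m) :=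
          (sum_subset subset_product fun p _ hp => by rw [hg p hp, zero_mul]).symm
      _ = 0 := by simpa using congrFun hsum m
  rintro ⟨a, β⟩
  by_cases hab : (a, β) ∈ s
  · have h := congrArg (coeff · a) <| Polynomial.eq_zero_of_forall_sum_eval_mul_pow_eq_zero hlam
      _ hP β (mem_image_of_mem Prod.snd hab)
    simpa [P, finsetSum_coeff, coeff_monomial, mem_image_of_mem Prod.fst hab] using h
  · exact hg _ hab

theorem pairwise_isUnit_zpow_sub_zpow {L : Rˣ} (hL : ∀ i : ℕ, 0 < i → IsUnit ((L : R) ^ i - 1)) :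
    Pairwise fun β γ : ℤ => IsUnit (((L ^ β : Rˣ) : R) - ((L ^ γ : Rˣ) : R)) := by
  have key : ∀ β γ : ℤ, β < γ → IsUnit (((L ^ γ : Rˣ) : R) - ((L ^ β : Rˣ) : R)) := by
    intro β γ h
    obtain ⟨k, hk, rfl⟩ : ∃ k : ℕ, 0 < k ∧ γ = β + k := ⟨(γ - β).toNat, by omega, by omega⟩
    have : ((L ^ (β + k) : Rˣ) : R) - ((L ^ β : Rˣ) : R) = (L ^ β : Rˣ) * ((L : R) ^ k - 1) := by
      rw [zpow_add, zpow_natCast, Units.val_mul, Units.val_pow_eq_pow_val]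
      ring
    rw [this]
    exact (L ^ β).isUnit.mul (hL k hk)
  intro β γ hne
  rcases hne.lt_or_gt with h | h
  · rw [← neg_sub]
    exact (key β γ h).neg
  · exact key γ β h

theorem zpow_sum {G ι : Type*} [CommGroup G] (a : G) (s : Finset ι) (f : ι → ℤ) :
    a ^ ∑ i ∈ s, f i = ∏ i ∈ s, a ^ f i := by
  classical
  induction s using Finset.induction_on with
  | empty => simp
  | insert i s hi ih => rw [sum_insert hi, prod_insert hi, zpow_add, ih]

theorem linearIndependent_prod_pow_mul_zpow_sum [IsAddTorsionFree R] {L : Rˣ}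
    (hL : ∀ i : ℕ, 0 < i → IsUnit ((L : R) ^ i - 1)) (r : ℕ) :
    LinearIndependent R fun ab : (Fin r → ℕ) × (Fin r → ℤ) => fun n : Fin r → ℕ =>
      (∏ i, (n i : R) ^ ab.1 i) * ((L ^ (∑ i, ab.2 i * (n i : ℤ)) : Rˣ) : R) := by
  refine (linearIndependent_equiv'
    (Equiv.arrowProdEquivProdArrow (Fin r) (fun _ => ℕ) (fun _ => ℤ)) ?_).1
    ((linearIndependent_natCast_pow_mul_pow (pairwise_isUnit_zpow_sub_zpow hL)).fin_pi_prod r)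
  ext a n
  simp [prod_mul_distrib, zpow_sum, zpow_mul]

end

theorem stmt10_general {R : Type*} [CommRing R]
    (htf : ∀ (N : ℤ) (x : R), N ≠ 0 → N • x = 0 → x = 0)
    (r : ℕ) (L : Rˣ)
    (hL : ∀ i : ℕ, 0 < i → IsUnit ((L : R) ^ i - 1))
    (S : Finset ((Fin r → ℕ) × (Fin r → ℤ))) (c : (Fin r → ℕ) × (Fin r → ℤ) → R)
    (hf : ∀ n : Fin r → ℕ,
      ∑ ab ∈ S, c ab * (∏ i, (n i : R) ^ ab.1 i) *
        ((L ^ (∑ i, ab.2 i * (n i : ℤ)) : Rˣ) : R) = 0) :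
    ∀ ab ∈ S, c ab = 0 := by
  have : IsAddTorsionFree R := ⟨fun n hn a b h => sub_eq_zero.1 <|
    htf n (a - b) (by exact_mod_cast hn) (by simpa [smul_sub, sub_eq_zero] using h)⟩
  exact linearIndependent_iff'.1 (linearIndependent_prod_pow_mul_zpow_sum hL r) S c
    (funext fun n => by simpa [mul_assoc] using hf n)

/-- Torsion-free case of the corrected Proposition 4.1: over a commutative ring with
torsion-free additive group, pointwise vanishing of the polynomial-exponential sum on
`ℕ^r` forces all coefficients to vanish. -/
theorem stmt10 {R : Type*} [CommRing R]
    (htf : ∀ (N : ℤ) (x : R), N ≠ 0 → N • x = 0 → x = 0)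
    (r : ℕ) (hr : 0 < r) (L : Rˣ)
    (hL : ∀ i : ℕ, 0 < i → IsUnit ((L : R) ^ i - 1))
    (S : Finset ((Fin r → ℕ) × (Fin r → ℤ))) (c : (Fin r → ℕ) × (Fin r → ℤ) → R)
    (hf : ∀ n : Fin r → ℕ,
      ∑ ab ∈ S, c ab * (∏ i, (n i : R) ^ ab.1 i) *
        ((L ^ (∑ i, ab.2 i * (n i : ℤ)) : Rˣ) : R) = 0) :
    ∀ ab ∈ S, c ab = 0 :=
  stmt10_general htf r L hL S c hf
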